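/- For all i ∈ {1,…,K} and j ∈ {1,…,J}: 4·Re[⟨Qφ_i, Qθ_j⟩ − ⟨Qφ_i, ψ(θ,φ)⟩⟨ψ(θ,φ), Qθ_j⟩] = i·Tr[[Φ_{θ/2}(G_j), Ψ_φ†(H_i)] ρ(θ)] (an equality of complex numbers; both sides are real); that is, the Wigner–Yanase information matrix elements of the evolved quantum Boltzmann machine with respect to mixed θ and φ parameters are I^WY_{ij}(θ,φ) = i⟨[Φ_{θ/2}(G_j), Ψ_φ†(H_i)]⟩_{ρ(θ)}. -/

import Mathlib

open MeasureTheory Matrix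
open scoped Kronecker

noncomputable section

attribute [local instance] Matrix.normedAddCommGroup Matrix.normedSpace

/-- Square complex matrices. -/
abbrev Mat (n : ℕ) := Matrix (Fin n) (Fin n) ℂ

/-- The parameterized Hamiltonian `G(θ) = ∑ j, θ j • G j`. -/
def Gm {n J : ℕ} (G : Fin J → Mat n) (θ : Fin J → ℝ) : Mat n := ∑ j, (θ j : ℂ) • G j

/-- The parameterized Hamiltonian `H(φ) = ∑ k, φ k • H k`. -/
def Hm {n K : ℕ} (H : Fin K → Mat n) (φ : Fin K → ℝ) : Mat n := ∑ k, (φ k : ℂ) • H k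

/-- The partition function `Z(θ) = Tr[exp (−G(θ))]` (a positive real). -/
def Zpf {n J : ℕ} (G : Fin J → Mat n) (θ : Fin J → ℝ) : ℝ :=
  (Matrix.trace (NormedSpace.exp (-(Gm G θ)))).re

/-- The quantum Boltzmann machine `ρ(θ) = exp(−G(θ))/Z(θ)`. -/
def qbm {n J : ℕ} (G : Fin J → Mat n) (θ : Fin J → ℝ) : Mat n :=
  ((Zpf G θ : ℂ))⁻¹ • NormedSpace.exp (-(Gm G θ))

/-- The unitary `exp(−i H(φ))`. -/
def uH {n K : ℕ} (H : Fin K → Mat n) (φ : Fin K → ℝ) : Mat n :=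
  NormedSpace.exp (-(Complex.I • Hm H φ))

/-- The unitary `exp(i H(φ))`. -/
def uH' {n K : ℕ} (H : Fin K → Mat n) (φ : Fin K → ℝ) : Mat n :=
  NormedSpace.exp (Complex.I • Hm H φ)

/-- The evolved quantum Boltzmann machine `ω(θ,φ) = exp(−iH(φ)) ρ(θ) exp(iH(φ))`. -/
def eqbm {n J K : ℕ} (G : Fin J → Mat n) (H : Fin K → Mat n)
    (θ : Fin J → ℝ) (φ : Fin K → ℝ) : Mat n :=
  uH H φ * qbm G θ * uH' H φ

/-- The high-peak-tent probability density `p(t) = (2/π) ln |coth (π t / 2)|`. -/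
def hpt (t : ℝ) : ℝ :=
  (2 / Real.pi) * Real.log |Real.cosh (Real.pi * t / 2) / Real.sinh (Real.pi * t / 2)|

/-- The channel `Φ_{θ/2}(X) = ∫ℝ p(t) exp(−iG(θ)t/2) X exp(iG(θ)t/2) dt`. -/
def chanΦhalf {n J : ℕ} (G : Fin J → Mat n) (θ : Fin J → ℝ) (X : Mat n) : Mat n :=
  ∫ t : ℝ, hpt t •
    (NormedSpace.exp ((-(Complex.I * (t : ℂ)) / 2) • Gm G θ) * X *
      NormedSpace.exp ((Complex.I * (t : ℂ) / 2) • Gm G θ))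

/-- The channel `Ψ_φ(X) = ∫₀¹ exp(−iH(φ)t) X exp(iH(φ)t) dt`. -/
def chanΨ {n K : ℕ} (H : Fin K → Mat n) (φ : Fin K → ℝ) (X : Mat n) : Mat n :=
  ∫ t in (0:ℝ)..1,
    (NormedSpace.exp ((-(Complex.I * (t : ℂ))) • Hm H φ) * X *
      NormedSpace.exp ((Complex.I * (t : ℂ)) • Hm H φ))

/-- The adjoint channel `Ψ_φ†(X) = ∫₀¹ exp(iH(φ)t) X exp(−iH(φ)t) dt`. -/
def chanΨdag {n K : ℕ} (H : Fin K → Mat n) (φ : Fin K → ℝ) (X : Mat n) : Mat n :=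
  ∫ t in (0:ℝ)..1,
    (NormedSpace.exp ((Complex.I * (t : ℂ)) • Hm H φ) * X *
      NormedSpace.exp ((-(Complex.I * (t : ℂ))) • Hm H φ))

/-- `√ρ(θ) = exp(−G(θ)/2)/√Z(θ)`. -/
def sqrtρ {n J : ℕ} (G : Fin J → Mat n) (θ : Fin J → ℝ) : Mat n :=
  ((Real.sqrt (Zpf G θ) : ℂ))⁻¹ • NormedSpace.exp (-((1 / 2 : ℂ) • Gm G θ))

/-- `√ω(θ,φ) = exp(−iH(φ)) √ρ(θ) exp(iH(φ))`. -/
def sqrtω {n J K : ℕ} (G : Fin J → Mat n) (H : Fin K → Mat n)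
    (θ : Fin J → ℝ) (φ : Fin K → ℝ) : Mat n :=
  uH H φ * sqrtρ G θ * uH' H φ

/-- The maximally entangled vector `Γ ∈ ℂ^{n²}`, `Γ_{(a,b)} = δ_{a,b}`. -/
def Γv (n : ℕ) : Fin n × Fin n → ℂ := fun ab => if ab.1 = ab.2 then 1 else 0

/-- The canonically purified evolved quantum Boltzmann machine `ψ(θ,φ) = (√ω(θ,φ) ⊗ I)Γ`. -/
def ψv {n J K : ℕ} (G : Fin J → Mat n) (H : Fin K → Mat n)
    (θ : Fin J → ℝ) (φ : Fin K → ℝ) : Fin n × Fin n → ℂ :=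
  (sqrtω G H θ φ ⊗ₖ (1 : Mat n)).mulVec (Γv n)

/-- The partial derivative of `ψ(θ,φ)` with respect to `θ_j`:
`Qθ_j = (1/2)⟨G_j⟩_{ρ(θ)} ψ(θ,φ) − (1/4)((exp(−iH(φ)) {Φ_{θ/2}(G_j), √ρ(θ)} exp(iH(φ))) ⊗ I)Γ`. -/
def Qθ {n J K : ℕ} (G : Fin J → Mat n) (H : Fin K → Mat n)
    (θ : Fin J → ℝ) (φ : Fin K → ℝ) (j : Fin J) : Fin n × Fin n → ℂ :=
  ((1 / 2 : ℂ) * Matrix.trace (G j * qbm G θ)) • ψv G H θ φ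
    - (1 / 4 : ℂ) •
        ((uH H φ * (chanΦhalf G θ (G j) * sqrtρ G θ + sqrtρ G θ * chanΦhalf G θ (G j)) *
            uH' H φ) ⊗ₖ (1 : Mat n)).mulVec (Γv n)

/-- The partial derivative of `ψ(θ,φ)` with respect to `φ_k`:
`Qφ_k = i(([√ω(θ,φ), Ψ_φ(H_k)]) ⊗ I)Γ`. -/
def Qφ {n J K : ℕ} (G : Fin J → Mat n) (H : Fin K → Mat n)
    (θ : Fin J → ℝ) (φ : Fin K → ℝ) (k : Fin K) : Fin n × Fin n → ℂ :=
  Complex.I •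
    ((sqrtω G H θ φ * chanΨ H φ (H k) - chanΨ H φ (H k) * sqrtω G H θ φ) ⊗ₖ (1 : Mat n)).mulVec
      (Γv n)

/-- `⟨x, y⟩ = ∑ m, conj (x m) * y m` on `ℂ^{n²}`. -/
def dotc2 {n : ℕ} (x y : Fin n × Fin n → ℂ) : ℂ := ∑ m, (starRingEnd ℂ) (x m) * y m


/-! Since `(A ⊗ I)Γ = vecRow A` and `⟨vecRow A, vecRow B⟩ = Tr(Aᴴ B)`, the claim is a trace
identity. The `φ`-derivative is `vecRow` of the Hermitian matrix `i[√ω, Ψ_φ(H_i)]`, which is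
trace-orthogonal to `√ω`; this kills the product term and the `⟨G_j⟩` part of the `θ`-derivative.
Conjugation by `exp(iH(φ))` turns `√ω` into `√ρ` and, after the substitution `t ↦ 1 - t`,
`Ψ_φ(H_i)` into `Ψ_φ†(H_i)`; cyclicity of the trace then gives
`Tr([√ρ, Ψ_φ†(H_i)] {Φ, √ρ}) = Tr([Ψ_φ†(H_i), Φ] ρ)`. Finally `Tr([Φ, Ψ_φ†(H_i)] ρ)` is purely
imaginary because `Φ`, `Ψ_φ†(H_i)` and `ρ` are Hermitian. -/

namespace Matrix

variable {m : Type*}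

theorem isHermitian_sum_ofReal_smul {ι : Type*} [Fintype ι] {M : ι → Matrix m m ℂ}
    (hM : ∀ l, (M l).IsHermitian) (c : ι → ℝ) : (∑ l, (c l : ℂ) • M l).IsHermitian :=
  isSelfAdjoint_sum _ fun l _ => (hM l).smul (Complex.conj_ofReal (c l))

variable [Fintype m]

section Trace

variable {R : Type*} [CommRing R]

theorem trace_commutator_mul_self (W X : Matrix m m R) : trace ((W * X - X * W) * W) = 0 := by
  rw [sub_mul, trace_sub, mul_assoc, trace_mul_comm W, sub_self]

theorem trace_smul_commutator_mul_self (a : R) (W X : Matrix m m R) :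
    trace ((a • (W * X - X * W)) * W) = 0 := by
  rw [smul_mul, trace_smul, trace_commutator_mul_self, smul_zero]

theorem trace_smul_commutator_mul_sub_smul (a c k : R) (W X D : Matrix m m R) :
    trace ((a • (W * X - X * W)) * (c • W - k • D)) = -(a * k) * trace ((W * X - X * W) * D) := by
  simp only [mul_sub, smul_mul_smul, trace_sub, trace_smul, trace_commutator_mul_self,
    smul_eq_mul]
  ring

theorem trace_commutator_mul_anticommutator (S X Y : Matrix m m R) :
    trace ((S * X - X * S) * (Y * S + S * Y)) = trace ((X * Y - Y * X) * (S * S)) := by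
  have h₁ : trace (S * X * (Y * S)) = trace (X * Y * (S * S)) := by
    rw [mul_assoc, trace_mul_comm S]; simp only [mul_assoc]
  have h₂ : trace (S * X * (S * Y)) = trace (X * S * (Y * S)) := by
    rw [mul_assoc, trace_mul_comm S]; simp only [mul_assoc]
  have h₃ : trace (X * S * (S * Y)) = trace (Y * X * (S * S)) := by
    rw [← mul_assoc, trace_mul_comm]; simp only [mul_assoc]
  simp only [sub_mul, mul_add, trace_add, trace_sub, h₁, h₂, h₃]
  ring

theorem trace_conj_commutator_mul_conj_anticommutator [DecidableEq m] {U U' : Matrix m m R}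
    (hU : U' * U = 1) (S X Y : Matrix m m R) :
    trace ((U * S * U' * (U * X * U') - U * X * U' * (U * S * U')) * (U * (Y * S + S * Y) * U')) =
      trace ((X * Y - Y * X) * (S * S)) := by
  have conj_mul_conj (A B : Matrix m m R) : U * A * U' * (U * B * U') = U * (A * B) * U' := by
    simp only [mul_assoc, ← mul_assoc U' U, hU, one_mul]
  rw [conj_mul_conj, conj_mul_conj, ← sub_mul, ← mul_sub, conj_mul_conj, trace_mul_cycle, hU,
    one_mul, trace_commutator_mul_anticommutator]

end Trace

section Hermitian

theorem isHermitian_I_smul_commutator {A B : Matrix m m ℂ} (hA : A.IsHermitian)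
    (hB : B.IsHermitian) : (Complex.I • (A * B - B * A)).IsHermitian := by
  rw [IsHermitian, conjTranspose_smul, conjTranspose_sub, conjTranspose_mul, conjTranspose_mul,
    hA.eq, hB.eq, Complex.star_def, Complex.conj_I, neg_smul, ← smul_neg, neg_sub]

theorem star_trace_commutator_mul {A B ρ : Matrix m m ℂ} (hA : A.IsHermitian)
    (hB : B.IsHermitian) (hρ : ρ.IsHermitian) :
    star (trace ((A * B - B * A) * ρ)) = -trace ((A * B - B * A) * ρ) := by
  rw [← trace_conjTranspose, conjTranspose_mul, conjTranspose_sub, conjTranspose_mul,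
    conjTranspose_mul, hA.eq, hB.eq, hρ.eq, trace_mul_comm, ← trace_neg, ← neg_mul, neg_sub]

theorem ofReal_re_I_mul_trace_commutator_mul {A B ρ : Matrix m m ℂ} (hA : A.IsHermitian)
    (hB : B.IsHermitian) (hρ : ρ.IsHermitian) :
    ((Complex.I * trace ((A * B - B * A) * ρ)).re : ℂ) =
      Complex.I * trace ((A * B - B * A) * ρ) := by
  rw [← Complex.conj_eq_iff_re, map_mul, Complex.conj_I]
  change -Complex.I * star _ = _
  rw [star_trace_commutator_mul hA hB hρ]
  ring

end Hermitian

section Exp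

variable [DecidableEq m]

theorem conjTranspose_exp_smul {M : Matrix m m ℂ} (hM : M.IsHermitian) (c : ℂ) :
    (NormedSpace.exp (c • M))ᴴ = NormedSpace.exp (star c • M) := by
  rw [← exp_conjTranspose, conjTranspose_smul, hM.eq]

theorem exp_smul_mul_exp_smul (M : Matrix m m ℂ) (c d : ℂ) :
    NormedSpace.exp (c • M) * NormedSpace.exp (d • M) = NormedSpace.exp ((c + d) • M) := by
  rw [← exp_add_of_commute _ _ (((Commute.refl M).smul_left c).smul_right d), add_smul]

theorem exp_smul_mul_exp_neg_smul (M : Matrix m m ℂ) (c : ℂ) :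
    NormedSpace.exp (c • M) * NormedSpace.exp ((-c) • M) = 1 := by
  rw [exp_smul_mul_exp_smul, add_neg_cancel, zero_smul, NormedSpace.exp_zero]

theorem exp_neg_half_smul_mul_self (M : Matrix m m ℂ) :
    NormedSpace.exp (-((1 / 2 : ℂ) • M)) * NormedSpace.exp (-((1 / 2 : ℂ) • M)) =
      NormedSpace.exp (-M) := by
  rw [← neg_smul, exp_smul_mul_exp_smul]
  congr 1
  module

theorem IsHermitian.exp_neg_half_smul {M : Matrix m m ℂ} (hM : M.IsHermitian) :
    (NormedSpace.exp (-((1 / 2 : ℂ) • M))).IsHermitian :=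
  (hM.smul (by simp [IsSelfAdjoint])).neg.exp

theorem isHermitian_exp_smul_mul_mul_exp_smul {M X : Matrix m m ℂ} (hM : M.IsHermitian)
    (hX : X.IsHermitian) {c d : ℂ} (hcd : star c = d) :
    (NormedSpace.exp (c • M) * X * NormedSpace.exp (d • M)).IsHermitian := by
  rw [IsHermitian, conjTranspose_mul, conjTranspose_mul, conjTranspose_exp_smul hM,
    conjTranspose_exp_smul hM, hX.eq, ← hcd, star_star, mul_assoc]

end Exp

section Integral

variable {α : Type*} [MeasurableSpace α] {μ : Measure α}

theorem conjTranspose_integral (f : α → Matrix m m ℂ) :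
    (∫ x, f x ∂μ)ᴴ = ∫ x, (f x)ᴴ ∂μ :=
  let e : Matrix m m ℂ ≃ₗ[ℝ] Matrix m m ℂ :=
    { conjTransposeAddEquiv m m ℂ with
      map_smul' := fun r A => by simp [conjTranspose_smul] }
  (e.toContinuousLinearEquiv.integral_comp_comm f).symm

theorem IsHermitian.integral {f : α → Matrix m m ℂ} (hf : ∀ x, (f x).IsHermitian) :
    (∫ x, f x ∂μ).IsHermitian := by
  rw [IsHermitian, conjTranspose_integral]
  exact integral_congr_ae (Filter.Eventually.of_forall hf)

variable [DecidableEq m]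

theorem integral_unit_mul_mul_unit (u v : (Matrix m m ℂ)ˣ) (f : α → Matrix m m ℂ) :
    ∫ x, (u : Matrix m m ℂ) * f x * v ∂μ = u * (∫ x, f x ∂μ) * v :=
  ((u.mulLeftLinearEquiv ℂ _).trans (v.mulRightLinearEquiv ℂ)).toContinuousLinearEquiv
    |>.integral_comp_comm f

theorem intervalIntegral_unit_mul_mul_unit (u v : (Matrix m m ℂ)ˣ) (f : ℝ → Matrix m m ℂ)
    (a b : ℝ) : ∫ t in a..b, (u : Matrix m m ℂ) * f t * v = u * (∫ t in a..b, f t) * v := by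
  simp only [intervalIntegral, integral_unit_mul_mul_unit, mul_sub, sub_mul]

theorem exp_I_smul_mul_integral_conj_mul_exp_neg_I_smul (M X : Matrix m m ℂ) :
    NormedSpace.exp (Complex.I • M) *
        (∫ t in (0:ℝ)..1, NormedSpace.exp ((-(Complex.I * t)) • M) * X *
          NormedSpace.exp ((Complex.I * t) • M)) * NormedSpace.exp (-(Complex.I • M)) =
      ∫ t in (0:ℝ)..1, NormedSpace.exp ((Complex.I * t) • M) * X *
        NormedSpace.exp ((-(Complex.I * t)) • M) := by
  let g (s : ℝ) : Matrix m m ℂ :=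
    NormedSpace.exp ((Complex.I * s) • M) * X * NormedSpace.exp ((-(Complex.I * s)) • M)
  have shift (t : ℝ) : NormedSpace.exp (Complex.I • M) *
      (NormedSpace.exp ((-(Complex.I * t)) • M) * X * NormedSpace.exp ((Complex.I * t) • M)) *
      NormedSpace.exp ((-Complex.I) • M) = g (1 - t) := by
    simp only [g, mul_assoc, exp_smul_mul_exp_smul]
    simp only [← mul_assoc, exp_smul_mul_exp_smul]
    congr 3
    · congr 1; push_cast; ring
    · push_cast; ring
  have hu := exp_smul_mul_exp_neg_smul M Complex.I
  have hv := neg_neg Complex.I ▸ exp_smul_mul_exp_neg_smul M (-Complex.I)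
  rw [← neg_smul, ← intervalIntegral_unit_mul_mul_unit ⟨_, _, hu, hv⟩ ⟨_, _, hv, hu⟩]
  simp only [shift]
  rw [intervalIntegral.integral_comp_sub_left g 1, sub_self, sub_zero]

end Integral

end Matrix

open Matrix

def vecRow {n : ℕ} (A : Mat n) : Fin n × Fin n → ℂ := fun ab => A ab.1 ab.2

theorem kronecker_one_mulVec_Γv {n : ℕ} (A : Mat n) : (A ⊗ₖ (1 : Mat n)) *ᵥ Γv n = vecRow A := by
  funext ⟨a, b⟩
  simp [mulVec, dotProduct, Γv, vecRow, Fintype.sum_prod_type, one_apply]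

theorem dotc2_vecRow {n : ℕ} (A B : Mat n) : dotc2 (vecRow A) (vecRow B) = trace (Aᴴ * B) := by
  simp only [dotc2, vecRow, trace, diag, mul_apply, conjTranspose_apply, Fintype.sum_prod_type]
  rw [Finset.sum_comm]
  rfl

section QBM

variable {n J K : ℕ} {G : Fin J → Mat n} {H : Fin K → Mat n} (θ : Fin J → ℝ) (φ : Fin K → ℝ)

theorem isHermitian_Gm (hG : ∀ j, (G j).IsHermitian) : (Gm G θ).IsHermitian :=
  isHermitian_sum_ofReal_smul hG θ

theorem isHermitian_Hm (hH : ∀ k, (H k).IsHermitian) : (Hm H φ).IsHermitian :=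
  isHermitian_sum_ofReal_smul hH φ

open scoped ComplexOrder in
theorem Zpf_nonneg (hG : ∀ j, (G j).IsHermitian) : 0 ≤ Zpf G θ := by
  have hA := (isHermitian_Gm θ hG).exp_neg_half_smul
  have h := (posSemidef_conjTranspose_mul_self
    (NormedSpace.exp (-((1 / 2 : ℂ) • Gm G θ)))).trace_nonneg
  rw [hA.eq, exp_neg_half_smul_mul_self] at h
  exact (Complex.nonneg_iff.1 h).1

theorem isHermitian_sqrtρ (hG : ∀ j, (G j).IsHermitian) : (sqrtρ G θ).IsHermitian :=
  (isHermitian_Gm θ hG).exp_neg_half_smul.smul (by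
    rw [IsSelfAdjoint, star_inv₀, Complex.star_def, Complex.conj_ofReal])

theorem sqrtρ_mul_self (hG : ∀ j, (G j).IsHermitian) : sqrtρ G θ * sqrtρ G θ = qbm G θ := by
  rw [sqrtρ, qbm, smul_mul_smul, exp_neg_half_smul_mul_self, ← mul_inv, ← Complex.ofReal_mul,
    Real.mul_self_sqrt (Zpf_nonneg θ hG)]

theorem isHermitian_qbm (hG : ∀ j, (G j).IsHermitian) : (qbm G θ).IsHermitian := by
  have h := isHermitian_mul_conjTranspose_self (sqrtρ G θ)
  rwa [(isHermitian_sqrtρ θ hG).eq, sqrtρ_mul_self θ hG] at h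

theorem uH_mul_uH' : uH H φ * uH' H φ = 1 := by
  simpa [uH, uH', neg_smul] using exp_smul_mul_exp_neg_smul (Hm H φ) (-Complex.I)

theorem uH'_mul_uH : uH' H φ * uH H φ = 1 := by
  simpa [uH, uH', neg_smul] using exp_smul_mul_exp_neg_smul (Hm H φ) Complex.I

theorem conjTranspose_uH (hH : ∀ k, (H k).IsHermitian) : (uH H φ)ᴴ = uH' H φ := by
  rw [uH, uH', ← neg_smul, conjTranspose_exp_smul (isHermitian_Hm φ hH)]
  simp

theorem isHermitian_sqrtω (hG : ∀ j, (G j).IsHermitian) (hH : ∀ k, (H k).IsHermitian) :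
    (sqrtω G H θ φ).IsHermitian := by
  rw [sqrtω, ← conjTranspose_uH φ hH]
  exact isHermitian_mul_mul_conjTranspose _ (isHermitian_sqrtρ θ hG)

theorem uH'_mul_chanΨ_mul_uH (X : Mat n) : uH' H φ * chanΨ H φ X * uH H φ = chanΨdag H φ X :=
  exp_I_smul_mul_integral_conj_mul_exp_neg_I_smul (Hm H φ) X

theorem uH_mul_chanΨdag_mul_uH' (X : Mat n) :
    uH H φ * chanΨdag H φ X * uH' H φ = chanΨ H φ X := by
  rw [← uH'_mul_chanΨ_mul_uH]
  simp only [← mul_assoc, uH_mul_uH', one_mul]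
  rw [mul_assoc, uH_mul_uH', mul_one]

theorem isHermitian_chanΦhalf (hG : ∀ j, (G j).IsHermitian) {X : Mat n} (hX : X.IsHermitian) :
    (chanΦhalf G θ X).IsHermitian :=
  IsHermitian.integral fun t =>
    (isHermitian_exp_smul_mul_mul_exp_smul (isHermitian_Gm θ hG) hX (by simp)).smul
      (IsSelfAdjoint.all (hpt t))

theorem isHermitian_chanΨ (hH : ∀ k, (H k).IsHermitian) {X : Mat n} (hX : X.IsHermitian) :
    (chanΨ H φ X).IsHermitian := by
  rw [chanΨ, intervalIntegral.integral_of_le zero_le_one]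
  exact IsHermitian.integral fun t =>
    isHermitian_exp_smul_mul_mul_exp_smul (isHermitian_Hm φ hH) hX (by simp)

theorem isHermitian_chanΨdag (hH : ∀ k, (H k).IsHermitian) {X : Mat n} (hX : X.IsHermitian) :
    (chanΨdag H φ X).IsHermitian := by
  rw [← uH'_mul_chanΨ_mul_uH, ← conjTranspose_uH φ hH]
  exact isHermitian_conjTranspose_mul_mul _ (isHermitian_chanΨ φ hH hX)

theorem ψv_eq_vecRow : ψv G H θ φ = vecRow (sqrtω G H θ φ) :=
  kronecker_one_mulVec_Γv _

theorem Qφ_eq_vecRow (k : Fin K) :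
    Qφ G H θ φ k = vecRow (Complex.I •
      (sqrtω G H θ φ * chanΨ H φ (H k) - chanΨ H φ (H k) * sqrtω G H θ φ)) := by
  rw [Qφ, kronecker_one_mulVec_Γv]
  rfl

theorem Qθ_eq_vecRow (j : Fin J) :
    Qθ G H θ φ j = vecRow
      (((1 / 2 : ℂ) * trace (G j * qbm G θ)) • sqrtω G H θ φ - (1 / 4 : ℂ) • (uH H φ *
        (chanΦhalf G θ (G j) * sqrtρ G θ + sqrtρ G θ * chanΦhalf G θ (G j)) * uH' H φ)) := by
  rw [Qθ, ψv_eq_vecRow, kronecker_one_mulVec_Γv]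
  rfl

theorem dotc2_Qφ_vecRow (hG : ∀ j, (G j).IsHermitian) (hH : ∀ k, (H k).IsHermitian) (k : Fin K)
    (B : Mat n) :
    dotc2 (Qφ G H θ φ k) (vecRow B) = trace ((Complex.I •
      (sqrtω G H θ φ * chanΨ H φ (H k) - chanΨ H φ (H k) * sqrtω G H θ φ)) * B) := by
  rw [Qφ_eq_vecRow, dotc2_vecRow, (isHermitian_I_smul_commutator (isHermitian_sqrtω θ φ hG hH)
    (isHermitian_chanΨ φ hH (hH k))).eq]

theorem dotc2_Qφ_ψv (hG : ∀ j, (G j).IsHermitian) (hH : ∀ k, (H k).IsHermitian) (k : Fin K) :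
    dotc2 (Qφ G H θ φ k) (ψv G H θ φ) = 0 := by
  rw [ψv_eq_vecRow, dotc2_Qφ_vecRow θ φ hG hH, trace_smul_commutator_mul_self]

theorem dotc2_Qφ_Qθ (hG : ∀ j, (G j).IsHermitian) (hH : ∀ k, (H k).IsHermitian) (k : Fin K)
    (j : Fin J) :
    dotc2 (Qφ G H θ φ k) (Qθ G H θ φ j) = ((1 / 4 : ℝ) : ℂ) * (Complex.I * trace
      ((chanΦhalf G θ (G j) * chanΨdag H φ (H k) - chanΨdag H φ (H k) * chanΦhalf G θ (G j)) *
        qbm G θ)) := by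
  rw [Qθ_eq_vecRow, dotc2_Qφ_vecRow θ φ hG hH, trace_smul_commutator_mul_sub_smul,
    ← uH_mul_chanΨdag_mul_uH', sqrtω, trace_conj_commutator_mul_conj_anticommutator (uH'_mul_uH φ),
    sqrtρ_mul_self θ hG, ← neg_sub (chanΦhalf G θ (G j) * _), Matrix.neg_mul, trace_neg]
  push_cast
  ring

end QBM

theorem stmt15_general {n J K : ℕ}
    (G : Fin J → Mat n) (H : Fin K → Mat n)
    (hG : ∀ j, (G j).IsHermitian) (hH : ∀ k, (H k).IsHermitian)
    (θ : Fin J → ℝ) (φ : Fin K → ℝ)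
    (i : Fin K) (j : Fin J) :
    ((4 * (dotc2 (Qφ G H θ φ i) (Qθ G H θ φ j)
        - dotc2 (Qφ G H θ φ i) (ψv G H θ φ) * dotc2 (ψv G H θ φ) (Qθ G H θ φ j)).re : ℝ) : ℂ)
      = Complex.I *
          Matrix.trace ((chanΦhalf G θ (G j) * chanΨdag H φ (H i)
            - chanΨdag H φ (H i) * chanΦhalf G θ (G j)) * qbm G θ) := by
  rw [dotc2_Qφ_ψv θ φ hG hH, zero_mul, sub_zero, dotc2_Qφ_Qθ θ φ hG hH, Complex.re_ofReal_mul,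
    ← mul_assoc, show (4 : ℝ) * (1 / 4) = 1 by norm_num, one_mul]
  exact ofReal_re_I_mul_trace_commutator_mul (isHermitian_chanΦhalf θ hG (hG j))
    (isHermitian_chanΨdag φ hH (hH i)) (isHermitian_qbm θ hG)

/-- Wigner–Yanase information matrix elements of the evolved quantum Boltzmann machine with
respect to mixed `θ` and `φ` parameters:
`I^WY_{ij}(θ,φ) = i⟨[Φ_{θ/2}(G_j), Ψ_φ†(H_i)]⟩_{ρ(θ)}`. -/
theorem stmt15 {n J K : ℕ} (hn : 1 ≤ n) (hJ : 1 ≤ J) (hK : 1 ≤ K)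
    (G : Fin J → Mat n) (H : Fin K → Mat n)
    (hG : ∀ j, (G j).IsHermitian) (hH : ∀ k, (H k).IsHermitian)
    (θ : Fin J → ℝ) (φ : Fin K → ℝ)
    (i : Fin K) (j : Fin J) :
    ((4 * (dotc2 (Qφ G H θ φ i) (Qθ G H θ φ j)
        - dotc2 (Qφ G H θ φ i) (ψv G H θ φ) * dotc2 (ψv G H θ φ) (Qθ G H θ φ j)).re : ℝ) : ℂ)
      = Complex.I *
          Matrix.trace ((chanΦhalf G θ (G j) * chanΨdag H φ (H i)
            - chanΨdag H φ (H i) * chanΦhalf G θ (G j)) * qbm G θ) :=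
  stmt15_general G H hG hH θ φ i j
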